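/- Let NH_n be the number of Motzkin paths of length n that have no horizontal step at their maximal level (i.e., paths of height h with no horizontal step at level h; the empty path is counted, so NH_0 = 1). In the formal power series ring ℚ[[v]], where 1 + v + v² is invertible, the family (NH_n · v^n · (1 + v + v²)^{−n})_{n≥0} is summable and v² · ∑_{n≥0} NH_n · (v·(1 + v + v²)^{−1})^n = (1 + v + v²)·(v² − 1)·∑_{h≥1} (−1)^{h−1} ∑_{k≥1} v^{h·k} + v·(1 + v)·(1 + v + v²). -/

import Mathlib

open Finset
open scoped Classical

/-- A step: `+1`, `-1` or `0`. -/
abbrev Step : Type := ({1, -1, 0} : Finset ℤ)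

/-- Partial sum of the first `k` steps. -/
def psum {n : ℕ} (w : Fin n → Step) (k : ℕ) : ℤ :=
  ∑ i : Fin n, if (i : ℕ) < k then (w i : ℤ) else 0

/-- `w` is a Motzkin path: all partial sums are nonnegative and the total sum is `0`. -/
def IsMotzkin {n : ℕ} (w : Fin n → Step) : Prop :=
  (∀ k ∈ Finset.range (n + 1), 0 ≤ psum w k) ∧ psum w n = 0

/-- The height of a path: the maximum of its partial sums (`0` for the empty path). -/
def height {n : ℕ} (w : Fin n → Step) : ℤ :=
  (Finset.range (n + 1)).sup' (Finset.nonempty_range_iff.mpr (Nat.succ_ne_zero n)) (psum w)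

/-- `w` has a horizontal step at level `j`: some step is `0` and the partial sum up to
and including that step equals `j`. -/
def HasHorizAt {n : ℕ} (w : Fin n → Step) (j : ℤ) : Prop :=
  ∃ i : Fin n, (w i : ℤ) = 0 ∧ psum w ((i : ℕ) + 1) = j

/-- `NH n` is the number of Motzkin paths of length `n` having no horizontal step at
their maximal level. -/
noncomputable def NH (n : ℕ) : ℕ :=
  (Finset.univ.filter fun w : Fin n → Step =>
    IsMotzkin w ∧ ¬ HasHorizAt w (height w)).card

/-- A family of formal power series is (formally) summable if for every degree `m`
only finitely many members of the family have a nonzero coefficient of `v^m`. -/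
def PSSummable (F : ℕ → PowerSeries ℚ) : Prop :=
  ∀ m : ℕ, {n : ℕ | PowerSeries.coeff m (F n) ≠ 0}.Finite

/-- The (formal) sum of a family of power series, computed coefficientwise. -/
noncomputable def PSSum (F : ℕ → PowerSeries ℚ) : PowerSeries ℚ :=
  PowerSeries.mk fun m => ∑ᶠ n : ℕ, PowerSeries.coeff m (F n)

/-!
Sort the paths by height. Those of height `h` with no flat step at level `h` are the paths in the
strip `[0, h]` with no flat step at level `h`, minus (for `h ≥ 1`) all paths in the strip
`[0, h - 1]`.

For a fixed strip, the generating functions `G_j` of paths ending at level `j` are the unique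
fixed point of the transfer equations `G_j = [j = 0] + x (G_{j-1} + G_{j+1} + G_j)` (the last term
dropped where flat steps are forbidden): uniqueness holds for any `x ∈ v ℚ⟦v⟧`. With
`x = v / (1 + v + v²)` the interior equations become `(1 + v²) G_j = v (G_{j-1} + G_{j+1})`,
solved by `v^j` and `v^(-j)`, and `v^j - v^(K - j)` meets the boundary conditions for `K = 2h + 1`
(no flat step at the top level `h`) or `K = 2h + 2` (flat steps allowed). At `j = 0` this gives
`v² G_0 = (1 + v + v²) (v² - (1 - v²) v^(K+2) / (1 - v^(K+2)))`; the alternating sum over `K` of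
these Lambert terms is the signed divisor series minus its terms for `d = 1, 2`. The identity is
then checked modulo every power of `v`.
-/

open PowerSeries Function

lemma step_cases (s : Step) : (s : ℤ) = 1 ∨ (s : ℤ) = -1 ∨ (s : ℤ) = 0 := by
  have hs := s.2
  simp only [mem_insert, mem_singleton] at hs
  exact hs

lemma psum_zero {n : ℕ} (w : Fin n → Step) : psum w 0 = 0 := by
  simp [psum]

lemma psum_of_length_le {n k : ℕ} (w : Fin n → Step) (hk : n ≤ k) : psum w k = psum w n := by
  unfold psum
  exact sum_congr rfl fun i _ => by rw [if_pos (by omega), if_pos i.2]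

lemma psum_le_length {n : ℕ} (w : Fin n → Step) (k : ℕ) : psum w k ≤ n := by
  calc psum w k ≤ ∑ _i : Fin n, (1 : ℤ) := sum_le_sum fun i _ => by
          split_ifs <;> rcases step_cases (w i) with h | h | h <;> omega
    _ = n := by simp

lemma psum_snoc {n : ℕ} (v : Fin n → Step) (s : Step) (k : ℕ) :
    psum (Fin.snoc v s : Fin (n + 1) → Step) k = psum v k + if n < k then (s : ℤ) else 0 := by
  simp [psum, Fin.sum_univ_castSucc]

lemma le_height {n : ℕ} (w : Fin n → Step) (k : ℕ) : psum w k ≤ height w := by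
  rcases le_or_gt k n with hk | hk
  · exact le_sup' (psum w) (mem_range.2 (by omega))
  · exact psum_of_length_le w hk.le ▸ le_sup' (psum w) (mem_range.2 n.lt_succ_self)

lemma height_le_iff {n : ℕ} (w : Fin n → Step) (c : ℤ) :
    height w ≤ c ↔ ∀ k, psum w k ≤ c :=
  ⟨fun hc k => (le_height w k).trans hc, fun hc => sup'_le _ _ fun k _ => hc k⟩

lemma height_nonneg {n : ℕ} (w : Fin n → Step) : 0 ≤ height w :=
  psum_zero w ▸ le_height w 0

lemma height_le_length {n : ℕ} (w : Fin n → Step) : height w ≤ n :=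
  (height_le_iff w n).2 (psum_le_length w)

lemma HasHorizAt.le_height {n : ℕ} {w : Fin n → Step} {j : ℤ} (hw : HasHorizAt w j) :
    j ≤ height w := by
  obtain ⟨i, -, hi⟩ := hw
  exact hi ▸ _root_.le_height w _

lemma isMotzkin_iff {n : ℕ} (w : Fin n → Step) :
    IsMotzkin w ↔ (∀ k, 0 ≤ psum w k) ∧ psum w n = 0 := by
  refine and_congr_left fun _ => ⟨fun h k => ?_, fun h k _ => h k⟩
  rcases le_or_gt k n with hk | hk
  · exact h k (mem_range.2 (by omega))
  · exact psum_of_length_le w hk.le ▸ h n (mem_range.2 n.lt_succ_self)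

lemma hasHorizAt_snoc {n : ℕ} (v : Fin n → Step) (s : Step) (j : ℤ) :
    HasHorizAt (Fin.snoc v s : Fin (n + 1) → Step) j ↔
      HasHorizAt v j ∨ ((s : ℤ) = 0 ∧ psum v n = j) := by
  simp only [HasHorizAt, Fin.exists_fin_succ', Fin.snoc_castSucc, Fin.snoc_last, psum_snoc,
    Fin.val_castSucc, Fin.val_last]
  have hlt (i : Fin n) : ¬ n < (i : ℕ) + 1 := by omega
  simp only [hlt, if_false, add_zero, lt_add_one, if_true, psum_of_length_le v n.le_succ]
  exact or_congr Iff.rfl (and_congr_right fun hs => by rw [hs, add_zero])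

lemma card_filter_fin_snoc {α : Type*} [Fintype α] {n : ℕ} (P : (Fin (n + 1) → α) → Prop)
    [DecidablePred P] :
    #{w | P w} = ∑ a : α, #{v : Fin n → α | P (Fin.snoc v a)} := by
  simp only [card_filter]
  rw [← (Fin.snocEquiv fun _ => α).sum_comp, Fintype.sum_prod_type]
  rfl

lemma sum_step {M : Type*} [AddCommMonoid M] (g : ℤ → M) :
    ∑ s : Step, g s = g 1 + g (-1) + g 0 := by
  rw [Finset.sum_coe_sort ({1, -1, 0} : Finset ℤ) g, sum_insert (by decide),
    sum_insert (by decide), sum_singleton, add_assoc]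

def IsStripPath (flatTop : Bool) (h : ℕ) {n : ℕ} (w : Fin n → Step) (j : ℤ) : Prop :=
  (∀ k, 0 ≤ psum w k ∧ psum w k ≤ h) ∧ psum w n = j ∧ (flatTop ∨ ¬ HasHorizAt w h)

noncomputable def stripCount (flatTop : Bool) (h n : ℕ) (j : ℤ) : ℕ :=
  #{w : Fin n → Step | IsStripPath flatTop h w j}

lemma isStripPath_snoc {flatTop : Bool} {h n : ℕ} (v : Fin n → Step) (s : Step) (j : ℤ) :
    IsStripPath flatTop h (Fin.snoc v s : Fin (n + 1) → Step) j ↔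
      IsStripPath flatTop h v (j - s) ∧ 0 ≤ j ∧ j ≤ h ∧
        (flatTop ∨ (s : ℤ) ≠ 0 ∨ j ≠ h) := by
  have hend : psum (Fin.snoc v s : Fin (n + 1) → Step) (n + 1) = psum v n + s := by
    rw [psum_snoc, if_pos n.lt_succ_self, psum_of_length_le v n.le_succ]
  have hbounds : (∀ k, 0 ≤ psum (Fin.snoc v s : Fin (n + 1) → Step) k ∧
        psum (Fin.snoc v s : Fin (n + 1) → Step) k ≤ h) ↔
      (∀ k, 0 ≤ psum v k ∧ psum v k ≤ h) ∧ 0 ≤ psum v n + s ∧ psum v n + s ≤ h := by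
    refine ⟨fun hb => ⟨fun k => ?_, hend ▸ hb (n + 1)⟩, fun ⟨hb, hlast⟩ k => ?_⟩
    · rcases le_or_gt k n with hk | hk
      · simpa [psum_snoc, not_lt.2 hk] using hb k
      · simpa [psum_of_length_le v hk.le, psum_snoc] using hb n
    · rcases le_or_gt k n with hk | hk
      · simpa [psum_snoc, not_lt.2 hk] using hb k
      · simpa [psum_snoc, hk, psum_of_length_le v hk.le] using hlast
  simp only [IsStripPath, hbounds, hend, hasHorizAt_snoc]
  grind

lemma stripCount_succ {flatTop : Bool} {h : ℕ} (n : ℕ) {j : ℤ} (hj0 : 0 ≤ j)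
    (hjh : j ≤ h) :
    stripCount flatTop h (n + 1) j = stripCount flatTop h n (j - 1) +
      stripCount flatTop h n (j + 1) +
        if flatTop ∨ j ≠ h then stripCount flatTop h n j else 0 := by
  simp only [stripCount, card_filter_fin_snoc, isStripPath_snoc, hj0, hjh, true_and]
  rw [sum_step fun s : ℤ =>
    #{v : Fin n → Step | IsStripPath flatTop h v (j - s) ∧ (flatTop ∨ s ≠ 0 ∨ j ≠ h)}]
  by_cases hc : flatTop = true ∨ j ≠ h <;> simp [hc]

lemma stripCount_zero (flatTop : Bool) (h : ℕ) (j : ℤ) :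
    stripCount flatTop h 0 j = if j = 0 then 1 else 0 := by
  have hpath (w : Fin 0 → Step) : IsStripPath flatTop h w j ↔ j = 0 := by
    simp [IsStripPath, psum, HasHorizAt, eq_comm]
  simp only [stripCount, hpath]
  split_ifs <;> simp [*]

lemma stripCount_eq_zero {flatTop : Bool} {h n : ℕ} {j : ℤ} (hj : ¬ (0 ≤ j ∧ j ≤ h)) :
    stripCount flatTop h n j = 0 := by
  refine card_eq_zero.2 (filter_eq_empty_iff.2 fun w _ hw => hj ?_)
  obtain ⟨hb, hend, -⟩ := hw
  exact hend ▸ hb n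

lemma isStripPath_zero_iff {flatTop : Bool} {h n : ℕ} (w : Fin n → Step) :
    IsStripPath flatTop h w 0 ↔
      IsMotzkin w ∧ height w ≤ h ∧ (flatTop ∨ ¬ HasHorizAt w h) := by
  rw [IsStripPath, isMotzkin_iff, height_le_iff]
  grind

noncomputable def NHOfHeight (h n : ℕ) : ℕ :=
  #{w : Fin n → Step | IsMotzkin w ∧ height w = h ∧ ¬ HasHorizAt w h}

lemma stripCount_true (h n : ℕ) :
    stripCount true h n 0 = #{w : Fin n → Step | IsMotzkin w ∧ height w ≤ h} := by
  simp [stripCount, isStripPath_zero_iff]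

lemma stripCount_false (h n : ℕ) :
    stripCount false h n 0 =
      #{w : Fin n → Step | IsMotzkin w ∧ height w < h} + NHOfHeight h n := by
  rw [NHOfHeight, ← card_union_of_disjoint (disjoint_filter.2 fun w _ hlt heq => by omega),
    ← filter_or, stripCount]
  refine congrArg card (filter_congr fun w _ => ?_)
  have hflat : height w < h → ¬ HasHorizAt w h := fun hlt hw => by
    have := hw.le_height
    omega
  rw [isStripPath_zero_iff]
  grind

lemma stripCount_false_zero (n : ℕ) : stripCount false 0 n 0 = NHOfHeight 0 n := by
  simp [stripCount_false, height_nonneg]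

lemma stripCount_false_succ (h n : ℕ) :
    stripCount false (h + 1) n 0 = stripCount true h n 0 + NHOfHeight (h + 1) n := by
  simp only [stripCount_false, stripCount_true, Nat.cast_succ, Int.lt_add_one_iff]

lemma NH_eq_sum_NHOfHeight {n H : ℕ} (hn : n < H) :
    NH n = ∑ h ∈ range H, NHOfHeight h n := by
  rw [NH, card_eq_sum_card_fiberwise (f := fun w => (height w).toNat) (t := range H)]
  · refine sum_congr rfl fun h _ => congrArg card ?_
    rw [filter_filter]
    refine filter_congr fun w _ => ?_
    have := height_nonneg w
    constructor
    · rintro ⟨⟨hm, hh⟩, rfl⟩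
      exact ⟨hm, by omega, by rwa [Int.toNat_of_nonneg this]⟩
    · rintro ⟨hm, hw, hh⟩
      exact ⟨⟨hm, hw ▸ hh⟩, by simp [hw]⟩
  · intro w _
    have := height_le_length w
    simp only [coe_range, Set.mem_Iio]
    omega

namespace PowerSeries

variable {R : Type*}

lemma eq_of_forall_X_pow_dvd_sub [Ring R] {f g : R⟦X⟧} (h : ∀ m, X ^ m ∣ f - g) :
    f = g := by
  refine sub_eq_zero.1 (ext fun m => ?_)
  simpa using X_pow_dvd_iff.1 (h (m + 1)) m m.lt_succ_self

lemma eq_of_isFixedPt_of_X_pow_dvd [Ring R] {ι : Type*}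
    {Φ : (ι → R⟦X⟧) → ι → R⟦X⟧}
    (hΦ : ∀ m F G, (∀ i, X ^ m ∣ F i - G i) → ∀ i, X ^ (m + 1) ∣ Φ F i - Φ G i)
    {F G : ι → R⟦X⟧} (hF : IsFixedPt Φ F) (hG : IsFixedPt Φ G) : F = G := by
  have hdvd (m : ℕ) : ∀ i, X ^ m ∣ F i - G i := by
    induction m with
    | zero => simp
    | succ m ih => simpa only [hF.eq, hG.eq] using hΦ m F G ih
  exact funext fun i => eq_of_forall_X_pow_dvd_sub fun m => hdvd m i

lemma X_pow_dvd_subst [CommRing R] {x : R⟦X⟧} (hx : X ∣ x) {m : ℕ} {f : R⟦X⟧}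
    (hf : X ^ m ∣ f) : X ^ m ∣ f.subst x := by
  obtain ⟨g, rfl⟩ := hf
  have ha : HasSubst x := HasSubst.of_constantCoeff_zero' (X_dvd_iff.1 hx)
  rw [subst_mul ha, subst_pow ha, subst_X ha]
  exact dvd_mul_of_dvd_left (pow_dvd_pow_of_dvd hx m) _

noncomputable def lambertTerm [Semiring R] (d : ℕ) : R⟦X⟧ :=
  mk fun m => if m ≠ 0 ∧ d ∣ m then 1 else 0

lemma lambertTerm_eq_subst [CommRing R] {d : ℕ} (hd : d ≠ 0) :
    (lambertTerm d : R⟦X⟧) = (mk 1 : R⟦X⟧).subst (X ^ d) - 1 := by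
  ext m
  rw [lambertTerm, coeff_mk, map_sub, coeff_subst_X_pow hd, coeff_one]
  rcases eq_or_ne m 0 with rfl | hm <;> simp [*]

lemma one_sub_X_pow_mul_lambertTerm [CommRing R] {d : ℕ} (hd : d ≠ 0) :
    (1 - X ^ d) * lambertTerm d = (X ^ d : R⟦X⟧) := by
  have hgeom := congrArg (substAlgHom (HasSubst.X_pow (R := R) hd)) (mk_one_mul_one_sub_eq_one R)
  rw [map_mul, map_sub, map_one, substAlgHom_X, coe_substAlgHom] at hgeom
  rw [lambertTerm_eq_subst hd]
  linear_combination hgeom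

end PowerSeries

lemma psSummable_C_mul_pow (a : ℕ → ℚ) {x : ℚ⟦X⟧} (hx : X ∣ x) :
    PSSummable fun n => C (a n) * x ^ n := by
  refine fun m => (Set.finite_Iic m).subset fun n hn => ?_
  by_contra hmn
  refine hn (X_pow_dvd_iff.1 (dvd_mul_of_dvd_right (pow_dvd_pow_of_dvd hx n) _) m ?_)
  simpa using hmn

lemma psSum_C_mul_pow (a : ℕ → ℚ) {x : ℚ⟦X⟧} (hx : X ∣ x) :
    PSSum (fun n => C (a n) * x ^ n) = (mk a).subst x := by
  ext m
  rw [PSSum, coeff_mk, coeff_subst' (HasSubst.of_constantCoeff_zero' (X_dvd_iff.1 hx))]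
  simp [coeff_C_mul]

section StripSystem

variable {R A B : Type*} [CommRing R] [CommRing A] [CommRing B]

-- Indexing by `ℤ` makes every fixed point vanish at the levels `-1` and `h + 1`, so the
-- equations at the bottom and top levels need no separate form.
def stripStep (flatTop : Bool) (h : ℕ) (y : A) (G : ℤ → A) (j : ℤ) : A :=
  if 0 ≤ j ∧ j ≤ h then
    (if j = 0 then 1 else 0) +
      y * (G (j - 1) + G (j + 1) + (if flatTop ∨ j ≠ h then 1 else 0) * G j)
  else 0

lemma isFixedPt_stripStep_comp {flatTop : Bool} {h : ℕ} {y : A} {G : ℤ → A} (φ : A →+* B)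
    (hG : IsFixedPt (stripStep flatTop h y) G) :
    IsFixedPt (stripStep flatTop h (φ y)) (φ ∘ G) := by
  refine funext fun j => ?_
  conv_rhs => rw [comp_apply, ← hG.eq]
  unfold stripStep
  split_ifs <;> simp

lemma X_pow_succ_dvd_stripStep_sub {flatTop : Bool} {h : ℕ} {y : R⟦X⟧} (hy : X ∣ y)
    {m : ℕ} {F G : ℤ → R⟦X⟧} (hFG : ∀ i, X ^ m ∣ F i - G i) (j : ℤ) :
    X ^ (m + 1) ∣ stripStep flatTop h y F j - stripStep flatTop h y G j := by
  by_cases hj : 0 ≤ j ∧ j ≤ h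
  · simp only [stripStep, if_pos hj, add_sub_add_left_eq_sub, ← mul_sub, pow_succ']
    refine mul_dvd_mul hy ?_
    convert ((hFG (j - 1)).add (hFG (j + 1))).add
      ((hFG j).mul_left (if flatTop ∨ j ≠ h then 1 else 0)) using 1
    ring
  · simp [stripStep, hj]

noncomputable def reflPoly (K : ℕ) (j : ℤ) : R⟦X⟧ := X ^ j.toNat - X ^ ((K : ℤ) - j).toNat

lemma reflPoly_of_eq {K : ℕ} {j : ℤ} (p q : ℕ) (hp : j = p) (hq : (K : ℤ) - j = q) :
    (reflPoly K j : R⟦X⟧) = X ^ p - X ^ q := by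
  rw [reflPoly, hq, hp, Int.toNat_natCast, Int.toNat_natCast]

lemma one_add_X_sq_mul_reflPoly {K : ℕ} {j : ℤ} (hj : 1 ≤ j) (hjK : j + 1 ≤ K) :
    (1 + X ^ 2) * (reflPoly K j : R⟦X⟧) = X * (reflPoly K (j - 1) + reflPoly K (j + 1)) := by
  obtain ⟨p, hp⟩ : ∃ p : ℕ, j = p + 1 := ⟨(j - 1).toNat, by omega⟩
  obtain ⟨q, hq⟩ : ∃ q : ℕ, (K : ℤ) - j = q + 1 :=
    ⟨((K : ℤ) - j - 1).toNat, by omega⟩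
  rw [reflPoly_of_eq (p + 1) (q + 1) (by omega) (by omega),
    reflPoly_of_eq p (q + 2) (by omega) (by omega), reflPoly_of_eq (p + 2) q (by omega) (by omega)]
  ring

lemma one_add_X_sq_mul_reflPoly_zero {K : ℕ} (hK : 1 ≤ K) :
    (1 + X ^ 2) * (reflPoly K 0 : R⟦X⟧) = (1 - X ^ (K + 2)) + X * reflPoly K 1 := by
  obtain ⟨k, rfl⟩ : ∃ k, K = k + 1 := ⟨K - 1, by omega⟩
  rw [reflPoly_of_eq (j := 0) 0 (k + 1) (by simp) (by simp),
    reflPoly_of_eq (j := 1) 1 k (by simp) (by push_cast; ring)]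
  ring

def stripWidth (flatTop : Bool) (h : ℕ) : ℕ := 2 * h + 1 + flatTop.toNat

lemma reflPoly_stripWidth_succ (flatTop : Bool) (h : ℕ) :
    (reflPoly (stripWidth flatTop h) (h + 1) : R⟦X⟧) + reflPoly (stripWidth flatTop h) h =
      (if flatTop then 1 else 0) * reflPoly (stripWidth flatTop h) h := by
  cases flatTop
  · rw [reflPoly_of_eq (h + 1) h (by simp) (by simp [stripWidth]; ring),
      reflPoly_of_eq (j := h) h (h + 1) rfl (by simp [stripWidth]; ring)]
    simp
  · rw [reflPoly_of_eq (h + 1) (h + 1) (by simp) (by simp [stripWidth]; ring)]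
    simp

noncomputable def stripPoly (flatTop : Bool) (h : ℕ) (j : ℤ) : R⟦X⟧ :=
  if 0 ≤ j ∧ j ≤ h then reflPoly (stripWidth flatTop h) j else 0

lemma one_add_X_add_X_sq_mul_stripPoly {flatTop : Bool} {h : ℕ} {j : ℤ} (hj0 : 0 ≤ j)
    (hjh : j ≤ h) :
    (1 + X + X ^ 2) * (stripPoly flatTop h j : R⟦X⟧) =
      (if j = 0 then 1 else 0) * (1 - X ^ (stripWidth flatTop h + 2)) +
        X * (stripPoly flatTop h (j - 1) + stripPoly flatTop h (j + 1) +
          (if flatTop ∨ j ≠ h then 1 else 0) * stripPoly flatTop h j) := by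
  have hj : stripPoly flatTop h j = (reflPoly (stripWidth flatTop h) j : R⟦X⟧) :=
    if_pos ⟨hj0, hjh⟩
  have hup : stripPoly flatTop h (j + 1) + (if flatTop ∨ j ≠ h then 1 else 0) *
      stripPoly flatTop h j =
        (reflPoly (stripWidth flatTop h) (j + 1) + reflPoly (stripWidth flatTop h) j :
          R⟦X⟧) := by
    rcases hjh.eq_or_lt with rfl | hlt
    · rw [stripPoly, if_neg (by omega), hj, zero_add, reflPoly_stripWidth_succ]
      simp
    · rw [stripPoly, if_pos ⟨by omega, by omega⟩, hj, if_pos (Or.inr hlt.ne), one_mul]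
  rw [add_assoc _ (stripPoly flatTop h (j + 1)), hup, hj]
  rcases eq_or_ne j 0 with rfl | hj1
  · rw [show stripPoly flatTop h (0 - 1) = 0 from if_neg (by omega), if_pos rfl, one_mul]
    simp only [zero_add]
    linear_combination one_add_X_sq_mul_reflPoly_zero (R := R) (K := stripWidth flatTop h)
      (by unfold stripWidth; omega)
  · rw [show stripPoly flatTop h (j - 1) = reflPoly (stripWidth flatTop h) (j - 1) from
      if_pos ⟨by omega, by omega⟩, if_neg hj1, zero_mul, zero_add]
    linear_combination one_add_X_sq_mul_reflPoly (R := R) (K := stripWidth flatTop h) (j := j)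
      (by omega) (by unfold stripWidth; omega)

end StripSystem

noncomputable def stripSol (flatTop : Bool) (h : ℕ) (j : ℤ) : ℚ⟦X⟧ :=
  (1 + X + X ^ 2) * stripPoly flatTop h j * (1 - X ^ (stripWidth flatTop h + 2))⁻¹

lemma isFixedPt_stripSol (flatTop : Bool) (h : ℕ) :
    IsFixedPt (stripStep flatTop h (X * (1 + X + X ^ 2)⁻¹)) (stripSol flatTop h) := by
  refine funext fun j => ?_
  by_cases hj : 0 ≤ j ∧ j ≤ h
  · have hu := PowerSeries.mul_inv_cancel (1 + X + X ^ 2 : ℚ⟦X⟧) (by simp)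
    have hw := PowerSeries.mul_inv_cancel (1 - X ^ (stripWidth flatTop h + 2) : ℚ⟦X⟧)
      (by simp)
    have hrec := one_add_X_add_X_sq_mul_stripPoly (R := ℚ) (flatTop := flatTop) hj.1 hj.2
    simp only [stripStep, if_pos hj, stripSol]
    set P : ℤ → ℚ⟦X⟧ := stripPoly flatTop h
    set w : ℚ⟦X⟧ := (1 - X ^ (stripWidth flatTop h + 2))⁻¹
    linear_combination
      X * w * (P (j - 1) + P (j + 1) + (if flatTop ∨ j ≠ h then 1 else 0) * P j) * hu -
        (if j = 0 then 1 else 0) * hw - w * hrec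
  · simp [stripStep, stripSol, stripPoly, hj]

noncomputable def stripGF (flatTop : Bool) (h : ℕ) (j : ℤ) : ℚ⟦X⟧ :=
  mk fun n => (stripCount flatTop h n j : ℚ)

lemma isFixedPt_stripGF (flatTop : Bool) (h : ℕ) :
    IsFixedPt (stripStep flatTop h X) (stripGF flatTop h) := by
  refine funext fun j => ?_
  by_cases hj : 0 ≤ j ∧ j ≤ h
  · rw [stripStep, if_pos hj]
    ext n
    cases n with
    | zero => split_ifs <;> simp [stripGF, stripCount_zero, *]
    | succ n =>
      simp only [stripGF, map_add, coeff_succ_X_mul, coeff_mk, stripCount_succ n hj.1 hj.2]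
      split_ifs <;> simp
  · ext n
    simp [stripStep, hj, stripGF, stripCount_eq_zero hj]

lemma subst_stripGF (flatTop : Bool) (h : ℕ) (j : ℤ) :
    (stripGF flatTop h j).subst (X * (1 + X + X ^ 2 : ℚ⟦X⟧)⁻¹) = stripSol flatTop h j := by
  have hx : X ∣ X * (1 + X + X ^ 2 : ℚ⟦X⟧)⁻¹ := dvd_mul_right _ _
  have ha : HasSubst (X * (1 + X + X ^ 2 : ℚ⟦X⟧)⁻¹) :=
    HasSubst.of_constantCoeff_zero' (X_dvd_iff.1 hx)
  have hφ := isFixedPt_stripStep_comp (substAlgHom ha).toRingHom (isFixedPt_stripGF flatTop h)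
  rw [AlgHom.toRingHom_eq_coe, RingHom.coe_coe, substAlgHom_X] at hφ
  have := eq_of_isFixedPt_of_X_pow_dvd (fun m F G hFG => X_pow_succ_dvd_stripStep_sub hx hFG) hφ
    (isFixedPt_stripSol flatTop h)
  simpa [coe_substAlgHom] using congrFun this j

lemma X_sq_mul_stripSol_zero (flatTop : Bool) (h : ℕ) :
    X ^ 2 * stripSol flatTop h 0 = (1 + X + X ^ 2) * X ^ 2 -
      (1 + X + X ^ 2) * (1 - X ^ 2) * lambertTerm (stripWidth flatTop h + 2) := by
  rw [stripSol, stripPoly, if_pos (by simp),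
    reflPoly_of_eq (j := 0) 0 (stripWidth flatTop h) rfl (by simp)]
  generalize stripWidth flatTop h = K
  have hw := PowerSeries.mul_inv_cancel (1 - X ^ (K + 2) : ℚ⟦X⟧) (by simp)
  have hP := one_sub_X_pow_mul_lambertTerm (R := ℚ) (d := K + 2) (by omega)
  linear_combination ((1 + X + X ^ 2) * X ^ 2 - (1 + X + X ^ 2) * (1 - X ^ 2) *
    lambertTerm (K + 2)) * hw + (1 + X + X ^ 2) * (1 - X ^ 2) * (1 - X ^ (K + 2))⁻¹ * hP

lemma mk_NHOfHeight_zero :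
    PowerSeries.mk (fun n => (NHOfHeight 0 n : ℚ)) = stripGF false 0 0 := by
  ext n
  simp [stripGF, stripCount_false_zero]

lemma mk_NHOfHeight_succ (h : ℕ) : PowerSeries.mk (fun n => (NHOfHeight (h + 1) n : ℚ)) =
    stripGF false (h + 1) 0 - stripGF true h 0 := by
  ext n
  simp [stripGF, stripCount_false_succ]

lemma X_sq_mul_sum_subst_NHOfHeight (H : ℕ) :
    X ^ 2 * ∑ h ∈ range (H + 1),
        (PowerSeries.mk fun n => (NHOfHeight h n : ℚ)).subst
          (X * (1 + X + X ^ 2 : ℚ⟦X⟧)⁻¹) =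
      (1 + X + X ^ 2) * (X ^ 2 + X) - (1 + X + X ^ 2) * (1 - X ^ 2) *
        ∑ d ∈ range (2 * H + 3), (-1 : ℚ) ^ d • lambertTerm (d + 1) := by
  have ha : HasSubst (X * (1 + X + X ^ 2 : ℚ⟦X⟧)⁻¹) :=
    HasSubst.of_constantCoeff_zero' (by simp)
  induction H with
  | zero =>
    have hP1 := one_sub_X_pow_mul_lambertTerm (R := ℚ) one_ne_zero
    have hP2 := one_sub_X_pow_mul_lambertTerm (R := ℚ) two_ne_zero
    rw [sum_range_one, mk_NHOfHeight_zero, subst_stripGF, X_sq_mul_stripSol_zero]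
    simp only [stripWidth, Bool.toNat_false, sum_range_succ, range_one, sum_singleton, pow_zero,
      pow_one, one_smul, neg_smul, Even.neg_pow even_two, one_pow]
    linear_combination (1 + X + X ^ 2) * (1 + X) * hP1 - (1 + X + X ^ 2) * hP2
  | succ H ih =>
    have e1 : stripWidth false (H + 1) + 2 = 2 * H + 3 + 1 + 1 := by simp [stripWidth]; ring
    have e2 : stripWidth true H + 2 = 2 * H + 3 + 1 := by simp [stripWidth]
    have hsplit :
        ∑ d ∈ range (2 * (H + 1) + 3), (-1 : ℚ) ^ d • (lambertTerm (d + 1) : ℚ⟦X⟧) =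
        ∑ d ∈ range (2 * H + 3), (-1 : ℚ) ^ d • lambertTerm (d + 1) -
          lambertTerm (2 * H + 3 + 1) + lambertTerm (2 * H + 3 + 1 + 1) := by
      rw [show 2 * (H + 1) + 3 = 2 * H + 3 + 1 + 1 by ring, sum_range_succ, sum_range_succ,
        Odd.neg_one_pow ⟨H + 1, by ring⟩, Even.neg_one_pow ⟨H + 2, by ring⟩, neg_one_smul,
        one_smul, sub_eq_add_neg]
    rw [sum_range_succ, mul_add, ih, mk_NHOfHeight_succ, subst_sub ha, subst_stripGF,
      subst_stripGF, mul_sub (X ^ 2 : ℚ⟦X⟧), X_sq_mul_stripSol_zero, X_sq_mul_stripSol_zero,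
      e1, e2, hsplit]
    ring

lemma X_pow_dvd_mk_NH_sub_sum (H : ℕ) :
    X ^ H ∣ PowerSeries.mk (fun n => (NH n : ℚ)) -
      ∑ h ∈ range H, PowerSeries.mk fun n => (NHOfHeight h n : ℚ) := by
  refine X_pow_dvd_iff.2 fun n hn => ?_
  simp [map_sum, NH_eq_sum_NHOfHeight hn]

lemma X_pow_dvd_signedDivisorSeries_sub (D : ℕ) :
    X ^ (D + 1) ∣ (PowerSeries.mk fun m =>
        if m = 0 then (0 : ℚ) else ∑ d ∈ m.divisors, (-1 : ℚ) ^ (d - 1)) -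
      ∑ d ∈ range D, (-1 : ℚ) ^ d • lambertTerm (d + 1) := by
  refine X_pow_dvd_iff.2 fun m hm => ?_
  rw [map_sub, coeff_mk, map_sum, sub_eq_zero]
  simp only [coeff_smul, lambertTerm, coeff_mk, smul_eq_mul, mul_ite, mul_one, mul_zero]
  split_ifs with hm0
  · simp [hm0]
  · have hsub : m.divisors ⊆ range (D + 1) := fun e he =>
      mem_range.2 (by have := Nat.divisor_le he; omega)
    rw [← inter_eq_right.2 hsub, ← filter_mem_eq_inter, sum_filter, sum_range_succ']
    simp [Nat.mem_divisors, hm0]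

open PowerSeries in
/-- In `ℚ[[v]]`: the family `(NH n · (v (1+v+v²)⁻¹)^n)` is formally summable and
`v² ∑_{n≥0} NH n (v (1+v+v²)⁻¹)^n
  = (1+v+v²)(v²-1) ∑_{h≥1} (-1)^{h-1} ∑_{k≥1} v^{hk} + v(1+v)(1+v+v²)`,
where `∑_{h≥1} (-1)^{h-1} ∑_{k≥1} v^{hk} = ∑_{m≥1} (∑_{d ∣ m} (-1)^{d-1}) v^m`. -/
theorem no_horiz_genfun_closed :
    PSSummable (fun n => C ((NH n : ℚ)) * (X * (1 + X + X ^ 2 : PowerSeries ℚ)⁻¹) ^ n) ∧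
    (X : PowerSeries ℚ) ^ 2 *
        PSSum (fun n => C ((NH n : ℚ)) * (X * (1 + X + X ^ 2 : PowerSeries ℚ)⁻¹) ^ n)
      = (1 + X + X ^ 2) * (X ^ 2 - 1) *
          (PowerSeries.mk fun m =>
            if m = 0 then (0 : ℚ) else ∑ d ∈ m.divisors, (-1 : ℚ) ^ (d - 1))
        + X * (1 + X) * (1 + X + X ^ 2) := by
  have hx : X ∣ X * (1 + X + X ^ 2 : ℚ⟦X⟧)⁻¹ := dvd_mul_right _ _
  have ha : HasSubst (X * (1 + X + X ^ 2 : ℚ⟦X⟧)⁻¹) :=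
    HasSubst.of_constantCoeff_zero' (X_dvd_iff.1 hx)
  refine ⟨psSummable_C_mul_pow _ hx, ?_⟩
  rw [psSum_C_mul_pow _ hx]
  refine eq_of_forall_X_pow_dvd_sub fun H => ?_
  have hNH := X_pow_dvd_subst hx (X_pow_dvd_mk_NH_sub_sum (H + 1))
  rw [subst_sub ha, ← coe_substAlgHom ha, map_sum] at hNH
  have hL := X_pow_dvd_signedDivisorSeries_sub (2 * H + 3)
  have hsum := X_sq_mul_sum_subst_NHOfHeight H
  rw [← coe_substAlgHom ha] at hsum ⊢
  obtain ⟨a, hTa⟩ := hNH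
  obtain ⟨b, hLb⟩ := hL
  exact ⟨X ^ 3 * a + (1 + X + X ^ 2) * (1 - X ^ 2) * X ^ (H + 4) * b, by
    linear_combination X ^ 2 * hTa + (1 + X + X ^ 2) * (1 - X ^ 2) * hLb + hsum⟩
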